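/- arXiv:1601.05884 — 2 statements merged into one kernel-verified Lean document; each statement's English description precedes it below -/
import Mathlib

section
/- Let X be a topological space, Y ⊆ C_p(X) a nonmetrizable compact subspace (with the topology of pointwise convergence), and suppose κ = cof(w(Y)) is uncountable, where w(Y) is the weight of Y. Then κ is not a caliber of X: there exists a κ-indexed decreasing family of nonempty open subsets of X every κ-sized subfamily of which has empty intersection. -/
/-!
A set `A ⊆ X` of size at most `w(Y)` separates the points of `Y`, and since `Y` is compact, any
separating set `A'` embeds `Y` into `ℝ^A'`, so `w(Y) ≤ |A'| + ℵ₀`. Write `A` as the union of an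
increasing `κ`-sequence of sets `A_α` of size `< w(Y)`; none of them separates `Y`, which gives
`f_α ≠ g_α` in `Y` agreeing on `A_α`. Take `U_α = ⋃_{β ≥ α} {f_β ≠ g_β}`. By compactness
`f_β - g_β → 0` pointwise along `β → κ`, and since `cof κ = κ > ℵ₀` this forces `f_β x = g_β x`
for all large `β`; so no point lies in cofinally many `U_α`, while every `κ`-sized set of indices
is cofinal.
-/

open Cardinal

universe u

def IsCaliber (X : Type u) [TopologicalSpace X] (κ : Cardinal.{u}) : Prop :=
  ∀ (ι : Type u) (U : ι → Set X), #ι = κ →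
    (∀ i, IsOpen (U i) ∧ (U i).Nonempty) →
    ∃ B : Set ι, #B = κ ∧ (⋂ i ∈ B, U i).Nonempty

/-- The weight of a topological space: the least cardinality of a topological basis. -/
noncomputable def tweight (X : Type u) [TopologicalSpace X] : Cardinal.{u} :=
  ⨅ B : {B : Set (Set X) // TopologicalSpace.IsTopologicalBasis B}, #B.1

open Set Filter Topology TopologicalSpace

section Weight

variable {Z : Type u} [TopologicalSpace Z]

theorem tweight_le_mk_of_isTopologicalBasis {B : Set (Set Z)} (hB : IsTopologicalBasis B) :
    tweight Z ≤ #B :=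
  ciInf_le' (fun B : {B : Set (Set Z) // IsTopologicalBasis B} => #B.1) ⟨B, hB⟩

theorem exists_isTopologicalBasis_mk_eq_tweight :
    ∃ B : Set (Set Z), IsTopologicalBasis B ∧ #B = tweight Z := by
  have : Nonempty {B : Set (Set Z) // IsTopologicalBasis B} := ⟨⟨_, isTopologicalBasis_opens⟩⟩
  obtain ⟨⟨B, hB⟩, hBw⟩ := ciInf_mem fun B : {B : Set (Set Z) // IsTopologicalBasis B} => #B.1
  exact ⟨B, hB, hBw⟩

theorem tweight_le_of_isInducing {W : Type u} [TopologicalSpace W] {e : Z → W}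
    (he : IsInducing e) : tweight Z ≤ tweight W := by
  obtain ⟨B, hB, hBw⟩ := exists_isTopologicalBasis_mk_eq_tweight (Z := W)
  calc tweight Z ≤ #(preimage e '' B) := tweight_le_mk_of_isTopologicalBasis (hB.isInducing he)
    _ ≤ #B := mk_image_le
    _ = tweight W := hBw

theorem aleph0_lt_tweight_of_not_metrizableSpace [CompactSpace Z] [T2Space Z]
    (h : ¬ MetrizableSpace Z) : ℵ₀ < tweight Z := by
  contrapose! h
  obtain ⟨B, hB, hBw⟩ := exists_isTopologicalBasis_mk_eq_tweight (Z := Z)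
  have : SecondCountableTopology Z :=
    hB.secondCountableTopology (countable_coe_iff.1 (mk_le_aleph0_iff.1 (hBw ▸ h)))
  exact metrizableSpace_of_t3_secondCountable Z

end Weight

theorem mk_finset_le_max (α : Type u) : #(Finset α) ≤ max #α ℵ₀ := by
  rcases finite_or_infinite α with hα | hα
  · exact (lt_aleph0_of_finite _).le.trans (le_max_right _ _)
  · exact (mk_finset_of_infinite α).le.trans (le_max_left _ _)

theorem tweight_pi_real_le (ι : Type u) : tweight (ι → ℝ) ≤ max #ι ℵ₀ := by
  classical
  let box : Finset (ι × countableBasis ℝ) → Set (ι → ℝ) := fun s =>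
    ⋂ p ∈ s, Function.eval p.1 ⁻¹' p.2
  have hbasis := isTopologicalBasis_pi fun _ : ι => isBasis_countableBasis ℝ
  have hbox : {S | ∃ (U : ι → Set ℝ) (F : Finset ι), (∀ i ∈ F, U i ∈ countableBasis ℝ) ∧
      S = (F : Set ι).pi U} ⊆ range box := by
    rintro _ ⟨U, F, hU, rfl⟩
    refine ⟨F.attach.image fun i : {i // i ∈ F} => (i.1, ⟨U i, hU i i.2⟩), ?_⟩
    ext x
    simp only [box, Set.pi, Finset.mem_image, Finset.mem_attach, true_and]
    aesop
  have hcount : #(ι × countableBasis ℝ) ≤ max #ι ℵ₀ := by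
    have : lift.{u} #(countableBasis ℝ) ≤ ℵ₀ :=
      lift_le_aleph0.2 (mk_le_aleph0_iff.2 (countable_countableBasis ℝ).to_subtype)
    rw [mk_prod, lift_uzero]
    exact (mul_le_max _ _).trans
      (max_le (max_le (le_max_left _ _) (this.trans (le_max_right _ _))) (le_max_right _ _))
  calc tweight (ι → ℝ) ≤ #(range box) :=
        (tweight_le_mk_of_isTopologicalBasis hbasis).trans (mk_le_mk_of_subset hbox)
    _ ≤ #(Finset (ι × countableBasis ℝ)) := mk_range_le
    _ ≤ max #ι ℵ₀ := (mk_finset_le_max _).trans (max_le hcount (le_max_right _ _))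

section SeparatingSet

variable {X : Type u} {Y : Set (X → ℝ)}

theorem tweight_le_of_injOn_domRestrict (hY : IsCompact Y) {A : Set X}
    (hA : Y.InjOn A.domRestrict) : tweight Y ≤ max #A ℵ₀ := by
  have : CompactSpace Y := isCompact_iff_compactSpace.mp hY
  have hcont : Continuous fun f : Y => A.domRestrict (f : X → ℝ) :=
    (Pi.continuous_domRestrict A).comp continuous_subtype_val
  have hinj : Function.Injective fun f : Y => A.domRestrict (f : X → ℝ) :=
    fun f g h => Subtype.ext (hA f.2 g.2 h)
  exact (tweight_le_of_isInducing (hcont.isClosedEmbedding hinj).isInducing).trans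
    (tweight_pi_real_le A)

theorem exists_injOn_domRestrict_mk_le_tweight (h : ℵ₀ ≤ tweight Y) :
    ∃ A : Set X, Y.InjOn A.domRestrict ∧ #A ≤ tweight Y := by
  obtain ⟨B, hB, hBw⟩ := exists_isTopologicalBasis_mk_eq_tweight (Z := Y)
  let P := {q : B × B | ∃ x : X,
    ∀ u ∈ (q.1 : Set Y), ∀ v ∈ (q.2 : Set Y), (u : X → ℝ) x ≠ (v : X → ℝ) x}
  choose sep hsep using fun q : P => q.2
  refine ⟨range sep, fun f hf g hg hfg => ?_, ?_⟩
  · by_contra hne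
    obtain ⟨x, hx⟩ := Function.ne_iff.1 hne
    obtain ⟨S, T, hS, hT, hfS, hgT, hST⟩ := t2_separation hx
    have hev : Continuous fun h : Y => (h : X → ℝ) x :=
      (continuous_apply x).comp continuous_subtype_val
    obtain ⟨U, hU, hfU, hUS⟩ := hB.exists_subset_of_mem_open (a := ⟨f, hf⟩) hfS (hS.preimage hev)
    obtain ⟨V, hV, hgV, hVT⟩ := hB.exists_subset_of_mem_open (a := ⟨g, hg⟩) hgT (hT.preimage hev)
    let q : P := ⟨(⟨U, hU⟩, ⟨V, hV⟩), x, fun u hu v hv => hST.ne_of_mem (hUS hu) (hVT hv)⟩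
    exact hsep q _ hfU _ hgV (congrFun hfg ⟨sep q, mem_range_self q⟩)
  · calc #(range sep) ≤ #P := mk_range_le
      _ ≤ #(B × B) := mk_set_le P
      _ = tweight Y := by rw [mk_prod, lift_id, mul_eq_self (hBw ▸ h), hBw]

theorem exists_eqOn_ne_of_max_lt_tweight (hY : IsCompact Y) {A : Set X}
    (hA : max #A ℵ₀ < tweight Y) : ∃ f ∈ Y, ∃ g ∈ Y, EqOn f g A ∧ f ≠ g := by
  by_contra! h
  refine (tweight_le_of_injOn_domRestrict hY fun f hf g hg hfg => ?_).not_gt hA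
  exact h f hf g hg (domRestrict_eq_domRestrict_iff.1 hfg)

theorem tendsto_sub_nhds_zero_of_injOn_domRestrict (hY : IsCompact Y) {A : Set X}
    (hA : Y.InjOn A.domRestrict) {ι : Type*} {l : Filter ι} {f g : ι → X → ℝ}
    (hf : ∀ i, f i ∈ Y) (hg : ∀ i, g i ∈ Y)
    (hfg : ∀ a ∈ A, ∀ᶠ i in l, f i a = g i a) (x : X) :
    Tendsto (fun i => f i x - g i x) l (𝓝 0) := by
  rw [tendsto_iff_ultrafilter]
  intro 𝒰 h𝒰
  obtain ⟨p, hpY, hp⟩ := (hY.prod hY).ultrafilter_le_nhds (𝒰.map fun i => (f i, g i))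
    (by
      rw [Ultrafilter.coe_map, le_principal_iff, mem_map]
      exact univ_mem' fun i => mk_mem_prod (hf i) (hg i))
  have hdiff (z : X) : Tendsto (fun i => f i z - g i z) 𝒰 (𝓝 (p.1 z - p.2 z)) :=
    (((continuous_apply z).comp continuous_fst).sub
      ((continuous_apply z).comp continuous_snd)).continuousAt.tendsto.comp hp
  have hpq : p.1 = p.2 := hA hpY.1 hpY.2 <| funext fun a => sub_eq_zero.1 <|
    tendsto_nhds_unique (hdiff a) <| tendsto_const_nhds.congr' <|
      Eventually.mono (h𝒰 (hfg a a.2)) fun i hi => (sub_eq_zero.2 hi).symm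
  simpa [hpq] using hdiff x

end SeparatingSet

theorem countableInterFilter_atTop_of_aleph0_lt_cof {α : Type u} [LinearOrder α]
    (h : ℵ₀ < Order.cof α) : CountableInterFilter (atTop : Filter α) := by
  have : Nonempty α := Order.cof_ne_zero_iff.1 (aleph0_pos.trans h).ne'
  refine ⟨fun S hSc hS => ?_⟩
  choose a ha using fun s : S => mem_atTop_sets.1 (hS s s.2)
  have : ¬ IsCofinal (range a) := fun hcof =>
    ((Order.cof_le hcof).trans (mk_range_le.trans (mk_le_aleph0_iff.2 hSc.to_subtype))).not_gt h
  obtain ⟨b, hb⟩ := not_isCofinal_iff.1 this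
  exact mem_atTop_sets.2 ⟨b, fun c hc s hs =>
    ha ⟨s, hs⟩ c ((hb _ (mem_range_self _)).le.trans hc)⟩

theorem Filter.Tendsto.eventually_eq_of_countableInterFilter {ι E : Type*} [TopologicalSpace E]
    [T1Space E] [FirstCountableTopology E] {l : Filter ι} [CountableInterFilter l] {u : ι → E}
    {a : E} (h : Tendsto u l (𝓝 a)) : ∀ᶠ i in l, u i = a := by
  obtain ⟨s, hs⟩ := (𝓝 a).exists_antitone_basis
  filter_upwards [eventually_countable_forall.2 fun n => h (hs.mem n)] with i hi
  have : u i ∈ (𝓝 a).ker := by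
    rw [hs.ker]
    exact mem_iInter₂.2 fun n _ => hi n
  rwa [ker_nhds] at this

theorem isCofinal_of_mk_eq {c : Cardinal.{u}} {B : Set c.ord.ToType} (hB : #B = c) :
    IsCofinal B := by
  by_contra hB'
  obtain ⟨x, hx⟩ := not_isCofinal_iff.1 hB'
  have : #(Iio x) < c := by simpa using mk_Iio_lt x
  exact (hB ▸ mk_le_mk_of_subset hx).not_gt this

theorem exists_eventually_mem_of_mk_le {A : Type u} {c : Cardinal.{u}} (hc : ℵ₀ ≤ c)
    (hA : #A ≤ c) : ∃ D : c.ord.cof.ord.ToType → Set A,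
      (∀ α, #(D α) < c) ∧ ∀ a, ∀ᶠ α in atTop, a ∈ D α := by
  obtain ⟨j⟩ : Nonempty (A ↪ c.ord.ToType) := by rwa [← Cardinal.le_def, mk_ord_toType]
  obtain ⟨S, hS, hStype⟩ := Ordinal.exists_ord_cof_eq c.ord.ToType
  rw [Ordinal.cof_toType] at hStype
  -- `e` enumerates a cofinal subset of `c.ord.ToType` of order type `c.ord.cof.ord`
  let e : c.ord.cof.ord.ToType ≃o S :=
    .ofRelIsoLT (Ordinal.type_eq.1 (by rw [Ordinal.type_toType, hStype])).some
  refine ⟨fun α => {a | j a ≤ e α}, fun α => ?_, fun a => ?_⟩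
  · calc #{a | j a ≤ e α} ≤ #(Iic (e α : c.ord.ToType)) :=
          mk_le_of_injective (f := fun a : {a | j a ≤ e α} => ⟨j a, a.2⟩)
            fun a b h => Subtype.ext (j.injective (congrArg Subtype.val h))
      _ ≤ #(Iio (e α : c.ord.ToType)) + 1 := by rw [← Iio_insert]; exact mk_insert_le
      _ < c := add_lt_of_lt hc (by simpa using mk_Iio_lt (e α : c.ord.ToType))
          (one_lt_aleph0.trans_le hc)
  · obtain ⟨s, hsS, hjs⟩ := hS (j a)
    exact (eventually_ge_atTop (e.symm ⟨s, hsS⟩)).mono fun β hβ =>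
      hjs.trans (Subtype.coe_le_coe.2 (e.symm_apply_le.1 hβ))

theorem iInter_iUnion_ge_eq_empty {ι X : Type*} [Preorder ι] [IsDirectedOrder ι] [Nonempty ι]
    {V : ι → Set X} (hV : ∀ x, ∀ᶠ i in atTop, x ∉ V i) {B : Set ι} (hB : IsCofinal B) :
    ⋂ i ∈ B, ⋃ j ≥ i, V j = ∅ := by
  refine eq_empty_iff_forall_notMem.2 fun x hx => ?_
  obtain ⟨i₀, hi₀⟩ := eventually_atTop.1 (hV x)
  obtain ⟨i, hiB, hi⟩ := hB i₀
  obtain ⟨j, hj, hxj⟩ := mem_iUnion₂.1 (mem_iInter₂.1 hx i hiB)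
  exact hi₀ j (hi.trans hj) hxj

theorem not_isCaliber_of_iInter_eq_empty {X ι : Type u} [TopologicalSpace X] {κ : Cardinal.{u}}
    (hι : #ι = κ) {U : ι → Set X} (hU : ∀ i, IsOpen (U i) ∧ (U i).Nonempty)
    (hB : ∀ B : Set ι, #B = κ → ⋂ i ∈ B, U i = ∅) : ¬ IsCaliber X κ := fun hcal =>
  let ⟨B, hBκ, hBne⟩ := hcal ι U hι hU
  hBne.ne_empty (hB B hBκ)

/-- If `Y ⊆ C_p(X)` is a nonmetrizable compact subspace (pointwise topology, realized as a
compact set of continuous functions inside `X → ℝ` with the product topology) and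
`κ = cof (w(Y))` is uncountable, then `κ` is not a caliber of `X`: there is a decreasing
`κ`-indexed family of nonempty open sets every `κ`-sized subfamily of which has empty
intersection. -/
theorem not_caliber_of_nonmetrizable_compact (X : Type u) [TopologicalSpace X]
    (Y : Set (X → ℝ)) (hYcont : ∀ f ∈ Y, Continuous f) (hYcomp : IsCompact Y)
    (hYnm : ¬ TopologicalSpace.MetrizableSpace Y)
    (κ : Cardinal.{u}) (hκ : κ = (tweight Y).ord.cof) (hunc : Cardinal.aleph0 < κ) :
    (∃ U : κ.ord.ToType → Set X,
      (∀ i, IsOpen (U i) ∧ (U i).Nonempty) ∧ Antitone U ∧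
      ∀ B : Set κ.ord.ToType, #B = κ → ⋂ i ∈ B, U i = ∅)
    ∧ ¬ IsCaliber X κ := by
  subst hκ
  set κ := (tweight Y).ord.cof
  have : CompactSpace Y := isCompact_iff_compactSpace.mp hYcomp
  have hw : ℵ₀ < tweight Y := aleph0_lt_tweight_of_not_metrizableSpace hYnm
  obtain ⟨A, hA, hAw⟩ := exists_injOn_domRestrict_mk_le_tweight hw.le
  obtain ⟨D, hDw, hDA⟩ := exists_eventually_mem_of_mk_le hw.le hAw
  choose f hf g hg hfg hne using fun α => exists_eqOn_ne_of_max_lt_tweight hYcomp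
    (A := Subtype.val '' D α) (max_lt (mk_image_le.trans_lt (hDw α)) hw)
  let V α : Set X := {x | f α x ≠ g α x}
  have : CountableInterFilter (atTop : Filter κ.ord.ToType) :=
    countableInterFilter_atTop_of_aleph0_lt_cof <| by
      rwa [Ordinal.cof_toType, Ordinal.cof_ord_cof]
  have hV (x : X) : ∀ᶠ α in atTop, x ∉ V α := by
    have hfgA (a) (ha : a ∈ A) : ∀ᶠ α in atTop, f α a = g α a :=
      (hDA ⟨a, ha⟩).mono fun α h => hfg α ⟨_, h, rfl⟩
    filter_upwards [(tendsto_sub_nhds_zero_of_injOn_domRestrict hYcomp hA hf hg hfgA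
      x).eventually_eq_of_countableInterFilter] with α h
    simpa [V, sub_eq_zero] using h
  have : Nonempty κ.ord.ToType := by
    rw [← mk_ne_zero_iff, mk_ord_toType]; exact (aleph0_pos.trans hunc).ne'
  have hU (α) : IsOpen (⋃ β ≥ α, V β) ∧ (⋃ β ≥ α, V β).Nonempty :=
    ⟨isOpen_biUnion fun β _ => isOpen_ne_fun (hYcont _ (hf β)) (hYcont _ (hg β)),
      (Function.ne_iff.1 (hne α)).imp fun x hx => mem_iUnion₂.2 ⟨α, le_rfl, hx⟩⟩
  have hempty (B : Set κ.ord.ToType) (hB : #B = κ) : ⋂ i ∈ B, ⋃ β ≥ i, V β = ∅ :=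
    iInter_iUnion_ge_eq_empty hV (isCofinal_of_mk_eq hB)
  exact ⟨⟨_, hU, fun α β h => biUnion_subset_biUnion_left (Ici_subset_Ici.2 h), hempty⟩,
    not_isCaliber_of_iInter_eq_empty (mk_ord_toType _) hU hempty⟩
end

section
/- Assume that the first uncountable cardinal κ_i of countable cofinality satisfies κ_i > 2^{ℵ₁}. Let X be a topological space such that every regular cardinal κ with ℵ₁ ≤ κ ≤ 2^{ℵ₁} is a caliber of X. Then every compact subspace Y ⊆ C_p(X) is metrizable. -/
open Cardinal

universe u

/-!
For a compact `Z ⊆ C_p(X)`, the least cardinality `μ` of a set `A ⊆ X` on which the members of `Z`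
are determined by their values plays the role of the weight of `Z`. A compact space all of whose
subsets of size `≤ ℵ₁` have metrizable closures is metrizable (otherwise a left-separated
`ω₁`-sequence is not separable), so it suffices to treat `Z = closure D` with `#D ≤ ℵ₁`. Then
`μ ≤ 2 ^ ℵ₁`, and `μ ≥ ℵ₁` unless `Z` is metrizable, so `λ = cof μ` is an uncountable regular
cardinal, hence a caliber of `X`. Writing `A` as a union of `λ` smaller sets, none of which
determines `Z`, yields pairs `f i ≠ g i` in `Z` agreeing on the `i`-th piece; the caliber gives a
point `x` and `ε > 0` with `ε ≤ |f i x - g i x|` for `λ` many `i`, and a cluster point of these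
pairs agrees on all of `A` but not at `x`.
-/

open Set Filter TopologicalSpace Ordinal

theorem exists_card_le_aleph_one_not_separable {α : Type u} [TopologicalSpace α] {Y : Set α}
    (hY : ∀ S ⊆ Y, S.Countable → ¬ Y ⊆ closure S) :
    ∃ W ⊆ Y, #W ≤ ℵ₁ ∧ ∀ T ⊆ W, T.Countable → ¬ W ⊆ closure T := by
  obtain ⟨y₀, hy₀⟩ : Y.Nonempty := by
    by_contra! hYe
    exact hY ∅ (empty_subset Y) countable_empty (by simp [hYe])
  have hnext : ∀ S : Set α, ∃ y, S ⊆ Y → S.Countable → y ∈ Y ∧ y ∉ closure S := fun S => by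
    by_cases hS : S ⊆ Y ∧ S.Countable
    · obtain ⟨y, hyY, hyS⟩ := not_subset.1 (hY S hS.1 hS.2)
      exact ⟨y, fun _ _ => ⟨hyY, hyS⟩⟩
    · exact ⟨y₀, fun h h' => absurd ⟨h, h'⟩ hS⟩
  choose next hnext using hnext
  let ι := (ℵ₁ : Cardinal.{u}).ord.ToType
  have hIio : ∀ i : ι, (Iio i).Countable := fun i => by
    have := mk_Iio_lt i (by simp [ι])
    rw [mk_ord_toType] at this
    exact le_aleph0_iff_set_countable.1 (lt_aleph_one_iff.1 this)
  have hbdd : ∀ J : Set ι, J.Countable → ∃ i₀, ∀ j ∈ J, j < i₀ := fun J hJ =>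
    not_isCofinal_iff.1 fun hcof => by
      have := (Order.cof_le hcof).trans (le_aleph0_iff_set_countable.2 hJ)
      rw [cof_toType, isRegular_aleph_one.cof_ord] at this
      exact this.not_gt aleph0_lt_aleph_one
  let y : ι → α := WellFoundedLT.fix fun i rec => next (range fun j : Iio i => rec j j.2)
  have hy_eq : ∀ i, y i = next (y '' Iio i) := fun i => by
    rw [image_eq_range]
    exact WellFoundedLT.fix_eq _ i
  have hy : ∀ i, y i ∈ Y ∧ y i ∉ closure (y '' Iio i) := fun i => by
    induction i using WellFoundedLT.induction with
    | ind i ih =>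
      rw [hy_eq]
      exact hnext _ (image_subset_iff.2 fun j hj => (ih j hj).1) ((hIio i).image y)
  refine ⟨range y, range_subset_iff.2 fun i => (hy i).1, ?_, fun T hTW hT hWT => ?_⟩
  · exact mk_range_le.trans_eq (mk_ord_toType _)
  · have : Countable T := hT.to_subtype
    choose idx hidx using fun t : T => hTW t.2
    obtain ⟨i₀, hi₀⟩ := hbdd (range idx) (countable_range idx)
    have hTsub : T ⊆ y '' Iio i₀ := fun t ht =>
      ⟨idx ⟨t, ht⟩, hi₀ _ (mem_range_self _), hidx ⟨t, ht⟩⟩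
    exact (hy i₀).2 (closure_mono hTsub (hWT (mem_range_self i₀)))

theorem exists_countable_subset_dense_of_isCompact_closure {α : Type u} [TopologicalSpace α]
    {W : Set α} (hW : IsCompact (closure W)) [MetrizableSpace (closure W)] :
    ∃ T ⊆ W, T.Countable ∧ W ⊆ closure T := by
  have : CompactSpace (closure W) := isCompact_iff_compactSpace.mp hW
  obtain ⟨t, hts, htc, hst⟩ := (isCompact_univ.isSeparable.mono
    (subset_univ (Subtype.val ⁻¹' W : Set (closure W)))).exists_countable_dense_subset
  refine ⟨Subtype.val '' t, image_subset_iff.2 hts, htc.image _, fun w hw => ?_⟩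
  exact closure_subtype.1 (hst (show (⟨w, subset_closure hw⟩ : closure W) ∈ _ from hw))

theorem IsCompact.metrizableSpace_of_forall_card_le_aleph_one {α : Type u} [TopologicalSpace α]
    [T2Space α] {Y : Set α} (hY : IsCompact Y)
    (h : ∀ D ⊆ Y, #D ≤ ℵ₁ → MetrizableSpace (closure D)) : MetrizableSpace Y := by
  obtain ⟨S, hSY, hS, hYS⟩ : ∃ S ⊆ Y, S.Countable ∧ Y ⊆ closure S := by
    by_contra! hsep
    obtain ⟨W, hWY, hW, hWsep⟩ := exists_card_le_aleph_one_not_separable hsep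
    have := h W hWY hW
    obtain ⟨T, hTW, hT, hWT⟩ :=
      exists_countable_subset_dense_of_isCompact_closure (hY.closure_of_subset hWY)
    exact hWsep T hTW hT hWT
  have hSY' : closure S = Y := (closure_minimal hSY hY.isClosed).antisymm hYS
  have := h S hSY ((le_aleph0_iff_set_countable.2 hS).trans (aleph0_le_aleph 1))
  rwa [hSY'] at this

def Determines {X β : Type*} (A : Set X) (Z : Set (X → β)) : Prop :=
  ∀ f ∈ Z, ∀ g ∈ Z, EqOn f g A → f = g

theorem Determines.metrizableSpace {X : Type*} {A : Set X} {Z : Set (X → ℝ)}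
    (hA : Determines A Z) (hAc : A.Countable) (hZ : IsCompact Z) : MetrizableSpace Z := by
  have : CompactSpace Z := isCompact_iff_compactSpace.mp hZ
  have : Countable A := hAc.to_subtype
  have hcont : Continuous fun (f : Z) (a : A) => (f : X → ℝ) a :=
    continuous_pi fun a => (continuous_apply (a : X)).comp continuous_subtype_val
  refine (hcont.isClosedEmbedding fun f g hfg => ?_).isEmbedding.metrizableSpace
  exact Subtype.ext (hA f f.2 g g.2 fun a ha => congrFun hfg ⟨a, ha⟩)

theorem exists_determines_closure_card_le {X : Type u} (D : Set (X → ℝ)) {κ : Cardinal.{u}}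
    (hκ : ℵ₀ ≤ κ) (hD : #D ≤ κ) : ∃ A : Set X, Determines A (closure D) ∧ #A ≤ 2 ^ κ := by
  -- Two distinct members of `closure D` lie in the closures of two pieces of `D` that are
  -- separated at some point; one such point per pair of pieces suffices.
  let Separated : Set D × Set D → Prop := fun ST => ∃ x : X,
    ∀ u ∈ closure (Subtype.val '' ST.1), ∀ v ∈ closure (Subtype.val '' ST.2), u x < v x
  choose x hx using fun ST : {ST // Separated ST} => ST.2
  refine ⟨range x, ?_, ?_⟩
  · have key : ∀ f ∈ closure D, ∀ g ∈ closure D, ∀ x₀, f x₀ < g x₀ →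
        ∃ y ∈ range x, f y < g y := by
      intro f hf g hg x₀ hlt
      obtain ⟨q₁, hfq₁, hq₁g⟩ := exists_between hlt
      obtain ⟨q₂, hq₁₂, hq₂g⟩ := exists_between hq₁g
      have hS : f ∈ closure (Subtype.val '' (Subtype.val ⁻¹' {w | w x₀ < q₁} : Set D)) := by
        rw [Subtype.image_preimage_coe, inter_comm]
        exact (isOpen_lt (continuous_apply x₀) continuous_const).inter_closure ⟨hfq₁, hf⟩
      have hT : g ∈ closure (Subtype.val '' (Subtype.val ⁻¹' {w | q₂ < w x₀} : Set D)) := by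
        rw [Subtype.image_preimage_coe, inter_comm]
        exact (isOpen_lt continuous_const (continuous_apply x₀)).inter_closure ⟨hq₂g, hg⟩
      have hsep : Separated (Subtype.val ⁻¹' {w | w x₀ < q₁}, Subtype.val ⁻¹' {w | q₂ < w x₀}) := by
        refine ⟨x₀, fun u hu v hv => ?_⟩
        rw [Subtype.image_preimage_coe] at hu hv
        have hu' : u x₀ ≤ q₁ := closure_minimal (fun w hw => le_of_lt hw.2)
          (isClosed_le (continuous_apply x₀) continuous_const) hu
        have hv' : q₂ ≤ v x₀ := closure_minimal (fun w hw => le_of_lt hw.2)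
          (isClosed_le continuous_const (continuous_apply x₀)) hv
        exact hu'.trans_lt (hq₁₂.trans_le hv')
      exact ⟨_, mem_range_self ⟨_, hsep⟩, hx _ f hS g hT⟩
    intro f hf g hg hfg
    by_contra hne
    obtain ⟨x₀, hx₀⟩ := Function.ne_iff.1 hne
    rcases hx₀.lt_or_gt with hlt | hlt
    · obtain ⟨y, hy, hfy⟩ := key f hf g hg x₀ hlt
      exact hfy.ne (hfg hy)
    · obtain ⟨y, hy, hgy⟩ := key g hg f hf x₀ hlt
      exact hgy.ne (hfg hy).symm
  · calc #(range x) ≤ #(Set D × Set D) := mk_range_le.trans (mk_subtype_le _)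
      _ = 2 ^ #D * 2 ^ #D := by simp [mk_set]
      _ ≤ 2 ^ κ * 2 ^ κ := by have := power_le_power_left two_ne_zero hD; gcongr
      _ = 2 ^ κ := mul_eq_self (hκ.trans (cantor κ).le)

theorem mk_Iic_lt {α : Type u} [LinearOrder α] [WellFoundedLT α] (hα : ℵ₀ ≤ #α)
    (h : (#α).ord = typeLT α) (i : α) : #(Iic i) < #α := by
  rw [← Iio_insert]
  exact mk_insert_le.trans_lt (add_lt_of_lt hα (mk_Iio_lt i h) (one_lt_aleph0.trans_le hα))

theorem exists_cover_card_lt_cof (α : Type u) (hα : ℵ₀ ≤ #α) :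
    ∃ (ι : Type u) (s : ι → Set α), #ι = (#α).ord.cof ∧ (∀ i, #(s i) < #α) ∧
      ∀ a, #{i | a ∉ s i} < (#α).ord.cof := by
  obtain ⟨e⟩ : Nonempty (α ≃ (#α).ord.ToType) := Cardinal.eq.1 (mk_ord_toType _).symm
  obtain ⟨C, hC, hCtype⟩ := Ordinal.exists_ord_cof_eq (#α).ord.ToType
  rw [Ordinal.cof_toType] at hCtype
  have hCcard : #C = (#α).ord.cof := by rw [← Ordinal.card_type (α := C) (· < ·), hCtype, card_ord]
  refine ⟨C, fun c => e ⁻¹' Iic (c : (#α).ord.ToType), hCcard, fun c => ?_, fun a => ?_⟩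
  · rw [mk_preimage_equiv]
    simpa using mk_Iic_lt (by simpa using hα) (by simp) (c : (#α).ord.ToType)
  · obtain ⟨c₀, hc₀C, hac₀⟩ := hC (e a)
    have hsub : {c : C | a ∉ e ⁻¹' Iic (c : (#α).ord.ToType)} ⊆ Iio ⟨c₀, hc₀C⟩ :=
      fun c (hc : ¬ e a ≤ c) => (not_le.1 hc).trans_le hac₀
    exact (mk_le_mk_of_subset hsub).trans_lt (hCcard ▸ mk_Iio_lt _ (by rw [hCcard, hCtype]))

theorem IsCaliber.exists_forall_le_of_pos {X : Type u} [TopologicalSpace X] {κ : Cardinal.{u}}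
    (hX : IsCaliber X κ) (hκ : ℵ₀ < κ.ord.cof) {ι : Type u} (hι : #ι = κ) (h : ι → X → ℝ)
    (hcont : ∀ i, Continuous (h i)) (hpos : ∀ i, ∃ x, 0 < h i x) :
    ∃ J : Set ι, #J = κ ∧ ∃ x, ∃ ε > 0, ∀ i ∈ J, ε ≤ h i x := by
  have hn : ∀ i, ∃ n : ℕ, ∃ x, 1 / (n + 1 : ℝ) < h i x := fun i =>
    let ⟨x, hx⟩ := hpos i
    let ⟨n, hn⟩ := exists_nat_one_div_lt hx
    ⟨n, x, hn⟩
  choose n hn using hn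
  obtain ⟨m, hm⟩ := infinite_pigeonhole (fun i => ULift.up.{u} (n i))
    (hι ▸ hκ.le.trans (cof_ord_le κ)) (by simpa [hι] using hκ)
  obtain ⟨B, hB, x, hx⟩ := hX _ (fun i : (fun i => ULift.up.{u} (n i)) ⁻¹' {m} =>
    {x | 1 / (n i + 1 : ℝ) < h i x}) (hm.trans hι)
    fun i => ⟨isOpen_lt continuous_const (hcont i), hn i⟩
  refine ⟨Subtype.val '' B, by rw [mk_image_eq Subtype.val_injective, hB], x, 1 / (m.down + 1),
    by positivity, ?_⟩
  rintro _ ⟨i, hiB, rfl⟩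
  have hni : n i = m.down := congrArg ULift.down i.2
  have hxi : 1 / (n i + 1 : ℝ) < h i x := mem_iInter₂.1 hx i hiB
  rw [hni] at hxi
  exact hxi.le

theorem Determines.not_eventually_le_abs_sub {X ι : Type*} {A : Set X} {Z : Set (X → ℝ)}
    (hA : Determines A Z) (hZ : IsCompact Z) {L : Filter ι} [L.NeBot] {f g : ι → X → ℝ}
    (hf : ∀ i, f i ∈ Z) (hg : ∀ i, g i ∈ Z) (hfg : ∀ a ∈ A, ∀ᶠ i in L, f i a = g i a)
    (x : X) {ε : ℝ} (hε : 0 < ε) : ¬ ∀ᶠ i in L, ε ≤ |f i x - g i x| := by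
  intro hx
  obtain ⟨p, hpZ, hp⟩ := (hZ.prod hZ) (f := map (fun i => (f i, g i)) L)
    (le_principal_iff.2 (mem_map.2 (univ_mem' fun i => mk_mem_prod (hf i) (hg i))))
  have hmem : ∀ C : Set ((X → ℝ) × (X → ℝ)), IsClosed C → (∀ᶠ i in L, (f i, g i) ∈ C) → p ∈ C :=
    fun C hC hev => hC.closure_subset (hp.mem_closure_of_mem _ hev)
  have hpA : p.1 = p.2 := hA _ hpZ.1 _ hpZ.2 fun a ha =>
    hmem {q | q.1 a = q.2 a} (isClosed_eq (by fun_prop) (by fun_prop)) (hfg a ha)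
  have hpx : ε ≤ |p.1 x - p.2 x| :=
    hmem {q | ε ≤ |q.1 x - q.2 x|} (isClosed_le continuous_const (by fun_prop)) hx
  have hε0 : ε ≤ 0 := by simpa [hpA] using hpx
  exact hε0.not_gt hε

theorem not_isCaliber_cof_of_determines_minimal {X : Type u} [TopologicalSpace X] {A : Set X}
    {Z : Set (X → ℝ)} (hZcont : ∀ f ∈ Z, Continuous f) (hZ : IsCompact Z)
    (hA : Determines A Z) (hmin : ∀ B : Set X, #B < #A → ¬ Determines B Z)
    (hcof : ℵ₀ < (#A).ord.cof) : ¬ IsCaliber X (#A).ord.cof := by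
  intro hcal
  have hA0 : ℵ₀ ≤ #A := hcof.le.trans (cof_ord_le _)
  have hreg : (#A).ord.cof.IsRegular := isRegular_cof (isSuccLimit_ord hA0)
  obtain ⟨ι, s, hι, hs, hcover⟩ := exists_cover_card_lt_cof A hA0
  have hwit : ∀ i, ∃ f ∈ Z, ∃ g ∈ Z, EqOn f g (Subtype.val '' s i) ∧ f ≠ g := fun i => by
    have := hmin _ (by rw [mk_image_eq Subtype.val_injective]; exact hs i)
    simpa [Determines] using this
  choose f hf g hg hfg hne using hwit
  have hpos : ∀ i, ∃ x, 0 < |f i x - g i x| := fun i =>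
    let ⟨x, hx⟩ := Function.ne_iff.1 (hne i)
    ⟨x, abs_pos.2 (sub_ne_zero.2 hx)⟩
  obtain ⟨J, hJ, x, ε, hε, hJx⟩ := hcal.exists_forall_le_of_pos (by rwa [hreg.cof_ord]) hι
    (fun i x => |f i x - g i x|) (fun i => ((hZcont _ (hf i)).sub (hZcont _ (hg i))).abs) hpos
  have : (cocardinal ι hreg ⊓ 𝓟 J).NeBot := cocardinal_inf_principal_neBot_iff.2 hJ.ge
  refine hA.not_eventually_le_abs_sub (L := cocardinal ι hreg ⊓ 𝓟 J) hZ hf hg (fun a ha => ?_) x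
    hε (mem_inf_of_right (mem_principal.2 hJx))
  filter_upwards [mem_inf_of_left (eventually_cocardinal.2 (hcover ⟨a, ha⟩))] with i hi
  exact hfg i ⟨⟨a, ha⟩, hi, rfl⟩

/-- Suppose the first uncountable cardinal of countable cofinality is greater than
`2 ^ ℵ₁` (equivalently, every uncountable cardinal of countable cofinality exceeds
`2 ^ ℵ₁`). If every regular cardinal `κ` with `ℵ₁ ≤ κ ≤ 2 ^ ℵ₁` is a caliber of `X`,
then every compact `Y ⊆ C_p(X)` is metrizable. -/
theorem metrizable_compact_subset_Cp_of_calibers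
    (hbig : ∀ κ : Cardinal.{u}, Cardinal.aleph0 < κ → κ.ord.cof = Cardinal.aleph0 →
      2 ^ Cardinal.aleph 1 < κ)
    (X : Type u) [TopologicalSpace X]
    (hcal : ∀ κ : Cardinal.{u}, Cardinal.aleph 1 ≤ κ → κ ≤ 2 ^ Cardinal.aleph 1 →
      κ.IsRegular → IsCaliber X κ)
    (Y : Set (X → ℝ)) (hYcont : ∀ f ∈ Y, Continuous f) (hYcomp : IsCompact Y) :
    TopologicalSpace.MetrizableSpace Y := by
  refine hYcomp.metrizableSpace_of_forall_card_le_aleph_one fun D hDY hD => ?_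
  have hDcomp : IsCompact (closure D) := hYcomp.closure_of_subset hDY
  have hDcont : ∀ f ∈ closure D, Continuous f :=
    fun f hf => hYcont f (closure_minimal hDY hYcomp.isClosed hf)
  obtain ⟨A₀, hA₀, hA₀card⟩ := exists_determines_closure_card_le D (aleph0_le_aleph 1) hD
  obtain ⟨A, hA, hmin⟩ := (InvImage.wf (fun A : Set X => #A) Cardinal.lt_wf).has_min
    {A | Determines A (closure D)} ⟨A₀, hA₀⟩
  have hAle : #A ≤ 2 ^ ℵ₁ := (not_lt.1 (hmin A₀ hA₀)).trans hA₀card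
  by_contra hnm
  have hAge : ℵ₁ ≤ #A := by
    by_contra! hlt
    exact hnm (hA.metrizableSpace (le_aleph0_iff_set_countable.1 (lt_aleph_one_iff.1 hlt)) hDcomp)
  have hreg := isRegular_cof (isSuccLimit_ord ((aleph0_le_aleph 1).trans hAge))
  have hcof : ℵ₀ < (#A).ord.cof := hreg.aleph0_le.lt_of_ne fun h =>
    (hbig _ (aleph0_lt_aleph_one.trans_le hAge) h.symm).not_ge hAle
  exact not_isCaliber_cof_of_determines_minimal hDcont hDcomp hA
    (fun B hB hBdet => hmin B hBdet hB) hcof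
    (hcal _ (succ_aleph0 ▸ Order.succ_le_of_lt hcof) ((cof_ord_le _).trans hAle) hreg)
end
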